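/- For all smooth vector fields A, B, C: ℝ³ → ℝ³ the quasi-isomorphism relation determining b̃₃ on three gauge fields holds: b̃₃(A,B,C) + b̃₂( F₂(B,C), A ) + b̃₂( F₂(A,C), B ) + b̃₂( F₂(A,B), C ) = (v·B)(v·C) curl A + (v·A)(v·C) curl B + (v·A)(v·B) curl C − curl( (v·A)(v·B)C + (v·A)(v·C)B + (v·B)(v·C)A ), where the right-hand side is F₃(curl A, B, C) + F₃(curl B, A, C) + F₃(curl C, A, B) − b₁(F₃(A,B,C)) with b₁ = curl on gauge fields. -/

import Mathlib

/-! With `α = v·A`, `β = v·B`, `γ = v·C`, the contraction `Σ ε_{abc} u_b w_c` is the cross product,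
so `b̃₂(X,Y) = ∇(v·Y) × X + ∇(v·X) × Y` and `b̃₃(A,B,C) = 2S` with
`S = ∇α × (βC + γB) + ∇β × (γA + αC) + ∇γ × (αB + βA)`. Since `v·F₂(X,Y) = -2 (v·X)(v·Y)`,
the three `b̃₂` terms add up to `-3S`, so the left side is `-S`. On the right, the Leibniz rule
`curl (f X) = ∇f × X + f curl X` cancels the `curl A`, `curl B`, `curl C` terms against
`curl F₃(A,B,C)`, and what is left is again `-S`. -/

noncomputable section

abbrev V3 := Fin 3 → ℝ

/-- Partial derivative ∂_i f at x. -/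
def pd (f : V3 → ℝ) (i : Fin 3) (x : V3) : ℝ :=
  fderiv ℝ f x (Pi.single i 1)

/-- Levi-Civita symbol ε_{abc} on Fin 3. -/
def eps (a b c : Fin 3) : ℝ :=
  (((b : ℕ) : ℝ) - ((a : ℕ) : ℝ)) * (((c : ℕ) : ℝ) - ((b : ℕ) : ℝ)) *
    (((c : ℕ) : ℝ) - ((a : ℕ) : ℝ)) / 2

/-- (curl A)_a = Σ_{b,c} ε_{abc} ∂_b A_c. -/
def curl (A : V3 → V3) (a : Fin 3) (x : V3) : ℝ :=
  ∑ b, ∑ c, eps a b c * pd (fun y => A y c) b x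

/-- b̃₂(A,B)_a = Σ_{i,b,c} v_i ε_{abc}(A_c ∂_b B_i + ∂_b A_i B_c). -/
def b2g (v : V3) (A B : V3 → V3) (x : V3) (a : Fin 3) : ℝ :=
  ∑ i, ∑ b, ∑ c, v i * eps a b c *
    (A x c * pd (fun y => B y i) b x + pd (fun y => A y i) b x * B x c)

/-- b̃₃(A,B,C)_a = 2 Σ_{i,j,b,c} v_i v_j ε_{abc}( ∂_bA_i(B_jC_c + B_cC_j)
  + ∂_bB_i(C_jA_c + C_cA_j) + ∂_bC_i(A_jB_c + A_cB_j) ). -/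
def b3g (v : V3) (A B C : V3 → V3) (x : V3) (a : Fin 3) : ℝ :=
  2 * ∑ i, ∑ j, ∑ b, ∑ c, v i * v j * eps a b c *
    (pd (fun y => A y i) b x * (B x j * C x c + B x c * C x j)
      + pd (fun y => B y i) b x * (C x j * A x c + C x c * A x j)
      + pd (fun y => C y i) b x * (A x j * B x c + A x c * B x j))

/-- F₂(A,B) = −(v·A)B − (v·B)A. -/
def F2 (v : V3) (A B : V3 → V3) : V3 → V3 :=
  fun y b => -(∑ i, v i * A y i) * B y b - (∑ i, v i * B y i) * A y b

/-- F₃(A,B,C) = (v·A)(v·B)C + (v·A)(v·C)B + (v·B)(v·C)A. -/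
def F3 (v : V3) (A B C : V3 → V3) : V3 → V3 :=
  fun y b => (∑ i, v i * A y i) * (∑ i, v i * B y i) * C y b
    + (∑ i, v i * A y i) * (∑ i, v i * C y i) * B y b
    + (∑ i, v i * B y i) * (∑ i, v i * C y i) * A y b

open Matrix

def grad (f : V3 → ℝ) (x : V3) : V3 := fun b => pd f b x

@[fun_prop]
lemma DifferentiableAt.const_dotProduct {ι E : Type*} [Fintype ι] [NormedAddCommGroup E]
    [NormedSpace ℝ E] {X : E → ι → ℝ} {x : E} (hX : DifferentiableAt ℝ X x) (v : ι → ℝ) :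
    DifferentiableAt ℝ (fun y => v ⬝ᵥ X y) x := by
  change DifferentiableAt ℝ (fun y => ∑ i, v i * X y i) x
  fun_prop

section Leibniz

variable {f g : V3 → ℝ} {X Y : V3 → V3} {x : V3}

lemma pd_add (hf : DifferentiableAt ℝ f x) (hg : DifferentiableAt ℝ g x) (i : Fin 3) :
    pd (fun y => f y + g y) i x = pd f i x + pd g i x := by
  simp [pd, fderiv_fun_add hf hg]

lemma pd_mul (hf : DifferentiableAt ℝ f x) (hg : DifferentiableAt ℝ g x) (i : Fin 3) :
    pd (fun y => f y * g y) i x = pd f i x * g x + f x * pd g i x := by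
  simp only [pd, fderiv_fun_mul hf hg, _root_.add_apply, _root_.smul_apply,
    smul_eq_mul]
  ring

lemma grad_mul (hf : DifferentiableAt ℝ f x) (hg : DifferentiableAt ℝ g x) :
    grad (fun y => f y * g y) x = g x • grad f x + f x • grad g x := by
  funext i
  simp only [grad, pd_mul hf hg, Pi.add_apply, Pi.smul_apply, smul_eq_mul]
  ring

lemma grad_const_mul (c : ℝ) : grad (fun y => c * f y) x = c • grad f x := by
  funext i
  change pd (c • f) i x = c * pd f i x
  simp [pd, fderiv_const_smul_field]

lemma grad_dotProduct (hX : DifferentiableAt ℝ X x) (v : V3) :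
    grad (fun y => v ⬝ᵥ X y) x = fun b => ∑ i, v i * pd (fun y => X y i) b x := by
  have hXi (i : Fin 3) : DifferentiableAt ℝ (fun y => X y i) x := by fun_prop
  funext b
  change pd (fun y => ∑ i, v i * X y i) b x = _
  simp [pd, fderiv_fun_sum fun i _ => (hXi i).const_mul (v i), fderiv_const_mul (hXi _)]

lemma curl_add (hX : DifferentiableAt ℝ X x) (hY : DifferentiableAt ℝ Y x) (a : Fin 3) :
    curl (fun y c => X y c + Y y c) a x = curl X a x + curl Y a x := by
  simp only [curl, fun c => pd_add (differentiableAt_pi.1 hX c) (differentiableAt_pi.1 hY c),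
    mul_add, Finset.sum_add_distrib]

lemma curl_mul (hf : DifferentiableAt ℝ f x) (hX : DifferentiableAt ℝ X x) (a : Fin 3) :
    curl (fun y c => f y * X y c) a x = (grad f x ⨯₃ X x) a + f x * curl X a x := by
  simp only [curl, fun c => pd_mul hf (differentiableAt_pi.1 hX c)]
  fin_cases a <;> simp [Fin.sum_univ_three, eps, cross_apply, grad] <;> ring

end Leibniz

lemma F2_apply (v : V3) (X Y : V3 → V3) (y : V3) :
    F2 v X Y y = -((v ⬝ᵥ X y) • Y y + (v ⬝ᵥ Y y) • X y) := by
  funext b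
  simp only [F2, dotProduct, Pi.neg_apply, Pi.add_apply, Pi.smul_apply, smul_eq_mul]
  ring

lemma dotProduct_F2 (v : V3) (X Y : V3 → V3) (y : V3) :
    v ⬝ᵥ F2 v X Y y = -2 * ((v ⬝ᵥ X y) * (v ⬝ᵥ Y y)) := by
  rw [F2_apply, dotProduct_neg, dotProduct_add, dotProduct_smul, dotProduct_smul]
  simp only [smul_eq_mul]
  ring

section GaugeFields

variable {A B C X Y : V3 → V3} {x : V3}

lemma b2g_eq_cross (hX : DifferentiableAt ℝ X x) (hY : DifferentiableAt ℝ Y x) (v : V3) :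
    b2g v X Y x = grad (fun y => v ⬝ᵥ Y y) x ⨯₃ X x + grad (fun y => v ⬝ᵥ X y) x ⨯₃ Y x := by
  rw [grad_dotProduct hX, grad_dotProduct hY]
  funext a
  fin_cases a <;> simp [b2g, Fin.sum_univ_three, eps, cross_apply] <;> ring

lemma b3g_eq_cross (hA : DifferentiableAt ℝ A x) (hB : DifferentiableAt ℝ B x)
    (hC : DifferentiableAt ℝ C x) (v : V3) :
    b3g v A B C x = (2 : ℝ) •
      (grad (fun y => v ⬝ᵥ A y) x ⨯₃ ((v ⬝ᵥ B x) • C x + (v ⬝ᵥ C x) • B x)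
        + grad (fun y => v ⬝ᵥ B y) x ⨯₃ ((v ⬝ᵥ C x) • A x + (v ⬝ᵥ A x) • C x)
        + grad (fun y => v ⬝ᵥ C y) x ⨯₃ ((v ⬝ᵥ A x) • B x + (v ⬝ᵥ B x) • A x)) := by
  rw [grad_dotProduct hA, grad_dotProduct hB, grad_dotProduct hC]
  funext a
  fin_cases a <;> simp [b3g, Fin.sum_univ_three, eps, cross_apply, dotProduct] <;> ring

lemma differentiableAt_F2 (hX : DifferentiableAt ℝ X x) (hY : DifferentiableAt ℝ Y x)
    (v : V3) : DifferentiableAt ℝ (F2 v X Y) x := by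
  unfold F2
  fun_prop

lemma grad_dotProduct_F2 (hX : DifferentiableAt ℝ X x) (hY : DifferentiableAt ℝ Y x) (v : V3) :
    grad (fun y => v ⬝ᵥ F2 v X Y y) x = (-2 : ℝ) •
      ((v ⬝ᵥ Y x) • grad (fun y => v ⬝ᵥ X y) x + (v ⬝ᵥ X x) • grad (fun y => v ⬝ᵥ Y y) x) := by
  simp only [dotProduct_F2]
  rw [grad_const_mul, grad_mul (by fun_prop) (by fun_prop)]

lemma curl_F3 (hA : DifferentiableAt ℝ A x) (hB : DifferentiableAt ℝ B x)
    (hC : DifferentiableAt ℝ C x) (v : V3) (a : Fin 3) :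
    curl (F3 v A B C) a x =
      (((v ⬝ᵥ B x) • grad (fun y => v ⬝ᵥ A y) x
          + (v ⬝ᵥ A x) • grad (fun y => v ⬝ᵥ B y) x) ⨯₃ C x) a
        + (((v ⬝ᵥ C x) • grad (fun y => v ⬝ᵥ A y) x
          + (v ⬝ᵥ A x) • grad (fun y => v ⬝ᵥ C y) x) ⨯₃ B x) a
        + (((v ⬝ᵥ C x) • grad (fun y => v ⬝ᵥ B y) x
          + (v ⬝ᵥ B x) • grad (fun y => v ⬝ᵥ C y) x) ⨯₃ A x) a
        + (v ⬝ᵥ A x) * (v ⬝ᵥ B x) * curl C a x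
        + (v ⬝ᵥ A x) * (v ⬝ᵥ C x) * curl B a x
        + (v ⬝ᵥ B x) * (v ⬝ᵥ C x) * curl A a x := by
  change curl (fun y c => (v ⬝ᵥ A y) * (v ⬝ᵥ B y) * C y c + (v ⬝ᵥ A y) * (v ⬝ᵥ C y) * B y c
    + (v ⬝ᵥ B y) * (v ⬝ᵥ C y) * A y c) a x = _
  rw [curl_add (by fun_prop) (by fun_prop), curl_add (by fun_prop) (by fun_prop),
    curl_mul (by fun_prop) hC, curl_mul (by fun_prop) hB, curl_mul (by fun_prop) hA,
    grad_mul (by fun_prop) (by fun_prop), grad_mul (by fun_prop) (by fun_prop),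
    grad_mul (by fun_prop) (by fun_prop)]
  ring

end GaugeFields

theorem deformed_CS_QISO_b3_on_gauge_fields
    (v : V3) (A B C : V3 → V3)
    (hA : ContDiff ℝ (⊤ : ℕ∞) A) (hB : ContDiff ℝ (⊤ : ℕ∞) B)
    (hC : ContDiff ℝ (⊤ : ℕ∞) C) :
    ∀ (a : Fin 3) (x : V3),
      b3g v A B C x a
        + b2g v (F2 v B C) A x a
        + b2g v (F2 v A C) B x a
        + b2g v (F2 v A B) C x a
      = (∑ i, v i * B x i) * (∑ i, v i * C x i) * curl A a x
        + (∑ i, v i * A x i) * (∑ i, v i * C x i) * curl B a x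
        + (∑ i, v i * A x i) * (∑ i, v i * B x i) * curl C a x
        - curl (F3 v A B C) a x := by
  intro a x
  have hAx : DifferentiableAt ℝ A x := hA.differentiable (by simp) x
  have hBx : DifferentiableAt ℝ B x := hB.differentiable (by simp) x
  have hCx : DifferentiableAt ℝ C x := hC.differentiable (by simp) x
  change _ = (v ⬝ᵥ B x) * (v ⬝ᵥ C x) * curl A a x + (v ⬝ᵥ A x) * (v ⬝ᵥ C x) * curl B a x
    + (v ⬝ᵥ A x) * (v ⬝ᵥ B x) * curl C a x - curl (F3 v A B C) a x
  rw [b3g_eq_cross hAx hBx hCx, b2g_eq_cross (differentiableAt_F2 hBx hCx v) hAx,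
    b2g_eq_cross (differentiableAt_F2 hAx hCx v) hBx,
    b2g_eq_cross (differentiableAt_F2 hAx hBx v) hCx, grad_dotProduct_F2 hBx hCx,
    grad_dotProduct_F2 hAx hCx, grad_dotProduct_F2 hAx hBx, F2_apply, F2_apply, F2_apply,
    curl_F3 hAx hBx hCx]
  simp only [map_add, map_neg, map_smul, LinearMap.add_apply, LinearMap.smul_apply,
    Pi.add_apply, Pi.smul_apply, Pi.neg_apply, smul_eq_mul]
  ring
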